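/- arXiv:2306.01963 — 2 statements merged into one kernel-verified Lean document; each statement's English description precedes it below -/
import Mathlib

section
/- Let (θ₁, φ₁), (θ₂, φ₂), (θ₃, φ₃) be independent, each uniformly distributed on [0,2π]², and set hᵢ := sin θᵢ·sin φᵢ. Fix a real number a and a natural number n_R ≥ 1, and define G₁ := Σ_{s=1}^{n_R−1} (n_R − s)·cos(s·a·(h₁ − h₃)) and G₂ := Σ_{s=1}^{n_R−1} (n_R − s)·cos(s·a·(h₂ − h₃)). Then E[G₁·G₂] = Σ_{s=1}^{n_R−1} (n_R − s)²·(1/2)·J₀(s·a/2)⁴·(1 + J₀(s·a)²) + Σ_{s₂=1}^{n_R−1} Σ_{s₁=1, s₁≠s₂}^{n_R−1} (n_R − s₁)(n_R − s₂)·(J₀(s₁·a/2)²·J₀(s₂·a/2)²/2)·(J₀((s₁ + s₂)·a/2)² + J₀(|s₁ − s₂|·a/2)²). -/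
/-!
For two independent uniform angles, `∫∫ cos (C + K sin θ sin φ) dθ dφ = (2π)² J₀(K/2)² cos C`:
the `φ`-integral gives `2π J₀(K sin θ) cos C`, and `∫₀^{2π} J₀(K sin θ) dθ = 2π J₀(K/2)²` is a
case of Neumann's addition theorem, obtained by writing `(2π J₀(K/2))²` as a double integral of
`cos (K/2 (sin u + sin v))` and substituting `u + v = w`,
`sin u + sin v = 2 sin (w/2) cos (u - w/2)`.
After expanding `G₁ G₂`, the product `cos (p (h₁ - h₃)) cos (q (h₂ - h₃))` is a sum of two cosines
affine in `h₃`, so the three pairs of angles can be integrated out one after the other; the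
diagonal `s₁ = s₂` is where `J₀ 0 = 1` enters.
-/

open Real MeasureTheory Finset

/-- Bessel function of the first kind of order zero (integral representation). -/
noncomputable def J₀ (x : ℝ) : ℝ :=
  (1 / (2 * π)) * ∫ t in (0:ℝ)..(2 * π), Real.cos (x * Real.sin t)

/-- Expectation over three independent pairs of angles, each uniform on `[0, 2π]²`. -/
noncomputable def E6 (f : ℝ → ℝ → ℝ → ℝ → ℝ → ℝ → ℝ) : ℝ :=
  (1 / (2 * π) ^ 6) *
    ∫ θ₁ in (0:ℝ)..(2 * π), ∫ φ₁ in (0:ℝ)..(2 * π),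
      ∫ θ₂ in (0:ℝ)..(2 * π), ∫ φ₂ in (0:ℝ)..(2 * π),
        ∫ θ₃ in (0:ℝ)..(2 * π), ∫ φ₃ in (0:ℝ)..(2 * π), f θ₁ φ₁ θ₂ φ₂ θ₃ φ₃

@[fun_prop]
lemma continuous_J₀ : Continuous J₀ :=
  continuous_const.mul <|
    intervalIntegral.continuous_parametric_intervalIntegral_of_continuous' (by fun_prop) _ _

lemma J₀_neg (x : ℝ) : J₀ (-x) = J₀ x := by
  simp only [J₀, neg_mul, cos_neg]

lemma J₀_zero : J₀ 0 = 1 := by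
  simp only [J₀, zero_mul, cos_zero, intervalIntegral.integral_const, sub_zero, smul_eq_mul,
    mul_one]
  field_simp

lemma integral_cos_mul_sin (K : ℝ) : ∫ t in 0..2 * π, cos (K * sin t) = 2 * π * J₀ K := by
  rw [J₀]
  field_simp

lemma integral_sin_mul_sin (K : ℝ) : ∫ t in 0..2 * π, sin (K * sin t) = 0 := by
  have h := intervalIntegral.integral_comp_sub_left (fun t ↦ sin (K * sin t)) (2 * π)
    (a := 0) (b := 2 * π)
  simp only [sub_zero, sub_self, sin_two_pi_sub, mul_neg, sin_neg,
    intervalIntegral.integral_neg] at h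
  linarith

lemma integral_cos_add_mul_sin (C K : ℝ) :
    ∫ t in 0..2 * π, cos (C + K * sin t) = 2 * π * J₀ K * cos C := by
  simp only [cos_add]
  rw [intervalIntegral.integral_sub (Continuous.intervalIntegrable (by fun_prop) _ _)
      (Continuous.intervalIntegrable (by fun_prop) _ _),
    intervalIntegral.integral_const_mul, intervalIntegral.integral_const_mul,
    integral_cos_mul_sin, integral_sin_mul_sin]
  ring

lemma Function.Periodic.intervalIntegral_comp_add_right {f : ℝ → ℝ} {T : ℝ}
    (hf : Function.Periodic f T) (d : ℝ) :
    ∫ t in 0..T, f (t + d) = ∫ t in 0..T, f t := by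
  simpa [add_comm] using hf.intervalIntegral_add_eq d 0

lemma Function.Periodic.intervalIntegral_comp_div_two {f : ℝ → ℝ} {T : ℝ}
    (hf : Function.Periodic f T) (hfi : ∀ t₁ t₂, IntervalIntegrable f volume t₁ t₂) :
    ∫ w in 0..2 * T, f (w / 2) = ∫ t in 0..2 * T, f t := by
  have h := hf.intervalIntegral_add_zsmul_eq 2 0 hfi
  simp only [zero_add, zsmul_eq_mul, Int.cast_ofNat] at h
  rw [intervalIntegral.integral_comp_div _ two_ne_zero, h]
  simp

lemma integral_cos_mul_cos_sub (c e : ℝ) :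
    ∫ u in 0..2 * π, cos (c * cos (u - e)) = 2 * π * J₀ c := by
  have hper : Function.Periodic (fun t ↦ cos (c * sin t)) (2 * π) := fun t ↦ by
    simp only [sin_add_two_pi]
  have hshift (u : ℝ) : cos (c * cos (u - e)) = cos (c * sin (u + (π / 2 - e))) := by
    rw [show u + (π / 2 - e) = u - e + π / 2 by ring, sin_add_pi_div_two]
  simp only [hshift]
  rw [hper.intervalIntegral_comp_add_right, integral_cos_mul_sin]

lemma intervalIntegral_intervalIntegral_swap_of_continuous {F : ℝ → ℝ → ℝ}
    (hF : Continuous (Function.uncurry F)) (a b c d : ℝ) :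
    ∫ x in a..b, ∫ y in c..d, F x y = ∫ y in c..d, ∫ x in a..b, F x y :=
  intervalIntegral_intervalIntegral_swap <|
    (hF.continuousOn.integrableOn_compact (isCompact_uIcc.prod isCompact_uIcc)).mono_set
      (Set.prod_mono Set.uIoc_subset_uIcc Set.uIoc_subset_uIcc)

lemma integral_integral_cos_mul_sin_add_mul_sin (x : ℝ) :
    ∫ u in 0..2 * π, ∫ v in 0..2 * π, cos (x * sin u + x * sin v) = (2 * π * J₀ x) ^ 2 := by
  simp only [integral_cos_add_mul_sin, intervalIntegral.integral_const_mul,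
    integral_cos_mul_sin]
  ring

lemma integral_J₀_mul_sin (K : ℝ) :
    ∫ t in 0..2 * π, J₀ (K * sin t) = 2 * π * J₀ (K / 2) ^ 2 := by
  have hshift (u : ℝ) : ∫ v in 0..2 * π, cos (K / 2 * sin u + K / 2 * sin v)
      = ∫ w in 0..2 * π, cos (K * sin (w / 2) * cos (u - w / 2)) := by
    have hper : Function.Periodic (fun v ↦ cos (K / 2 * sin u + K / 2 * sin v)) (2 * π) :=
      fun v ↦ by simp only [sin_add_two_pi]
    rw [← hper.intervalIntegral_comp_add_right (-u)]
    refine intervalIntegral.integral_congr fun w _ ↦ ?_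
    simp only [← mul_add, sin_add_sin]
    ring_nf
  have hper : Function.Periodic (fun t ↦ J₀ (K * sin t)) π := fun t ↦ by
    simp only [sin_add_pi, mul_neg, J₀_neg]
  have key : (2 * π * J₀ (K / 2)) ^ 2 = 2 * π * ∫ t in 0..2 * π, J₀ (K * sin t) := calc
    _ = ∫ u in 0..2 * π, ∫ v in 0..2 * π, cos (K / 2 * sin u + K / 2 * sin v) :=
      (integral_integral_cos_mul_sin_add_mul_sin _).symm
    _ = ∫ w in 0..2 * π, ∫ u in 0..2 * π, cos (K * sin (w / 2) * cos (u - w / 2)) := by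
      simp only [hshift]
      exact intervalIntegral_intervalIntegral_swap_of_continuous (by fun_prop) _ _ _ _
    _ = 2 * π * ∫ w in 0..2 * π, J₀ (K * sin (w / 2)) := by
      simp only [integral_cos_mul_cos_sub, intervalIntegral.integral_const_mul]
    _ = 2 * π * ∫ t in 0..2 * π, J₀ (K * sin t) := by
      rw [hper.intervalIntegral_comp_div_two fun _ _ ↦
        Continuous.intervalIntegrable (by fun_prop) _ _]
  have h2π : 2 * π ≠ 0 := by positivity
  exact mul_left_cancel₀ h2π (by linear_combination key.symm)

noncomputable def sinProdIntegral (g : ℝ → ℝ) : ℝ :=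
  ∫ θ in 0..2 * π, ∫ φ in 0..2 * π, g (sin θ * sin φ)

lemma continuous_sinProdIntegral {X : Type*} [TopologicalSpace X] {g : X → ℝ → ℝ}
    (hg : Continuous (Function.uncurry g)) : Continuous fun x ↦ sinProdIntegral (g x) :=
  intervalIntegral.continuous_parametric_intervalIntegral_of_continuous'
    (intervalIntegral.continuous_parametric_intervalIntegral_of_continuous'
      (f := fun (p : X × ℝ) φ ↦ g p.1 (sin p.2 * sin φ)) (by fun_prop) _ _) _ _

lemma intervalIntegrable_integral_comp_sin_mul_sin {g : ℝ → ℝ} (hg : Continuous g) (a b : ℝ) :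
    IntervalIntegrable (fun θ ↦ ∫ φ in 0..2 * π, g (sin θ * sin φ)) volume a b :=
  (intervalIntegral.continuous_parametric_intervalIntegral_of_continuous'
    (f := fun θ φ ↦ g (sin θ * sin φ)) (by fun_prop) _ _).intervalIntegrable _ _

lemma sinProdIntegral_const_mul (c : ℝ) (g : ℝ → ℝ) :
    sinProdIntegral (fun h ↦ c * g h) = c * sinProdIntegral g := by
  simp only [sinProdIntegral, intervalIntegral.integral_const_mul]

lemma sinProdIntegral_add {g₁ g₂ : ℝ → ℝ} (h₁ : Continuous g₁) (h₂ : Continuous g₂) :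
    sinProdIntegral (fun h ↦ g₁ h + g₂ h) = sinProdIntegral g₁ + sinProdIntegral g₂ := by
  unfold sinProdIntegral
  rw [← intervalIntegral.integral_add (intervalIntegrable_integral_comp_sin_mul_sin h₁ _ _)
    (intervalIntegrable_integral_comp_sin_mul_sin h₂ _ _)]
  exact intervalIntegral.integral_congr fun θ _ ↦ intervalIntegral.integral_add
    (Continuous.intervalIntegrable (by fun_prop) _ _)
    (Continuous.intervalIntegrable (by fun_prop) _ _)

lemma sinProdIntegral_finset_sum {ι : Type*} (s : Finset ι) {g : ι → ℝ → ℝ}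
    (hg : ∀ i ∈ s, Continuous (g i)) :
    sinProdIntegral (fun h ↦ ∑ i ∈ s, g i h) = ∑ i ∈ s, sinProdIntegral (g i) := by
  unfold sinProdIntegral
  rw [← intervalIntegral.integral_finsetSum fun i hi ↦
    intervalIntegrable_integral_comp_sin_mul_sin (hg i hi) _ _]
  exact intervalIntegral.integral_congr fun θ _ ↦ intervalIntegral.integral_finsetSum
    fun i hi ↦ ((hg i hi).comp (by fun_prop)).intervalIntegrable _ _

lemma sinProdIntegral_cos_add_mul (C K : ℝ) :
    sinProdIntegral (fun h ↦ cos (C + K * h)) = (2 * π) ^ 2 * J₀ (K / 2) ^ 2 * cos C := by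
  have hassoc (θ φ : ℝ) : K * (sin θ * sin φ) = K * sin θ * sin φ := (mul_assoc _ _ _).symm
  simp only [sinProdIntegral, hassoc, integral_cos_add_mul_sin,
    intervalIntegral.integral_mul_const, intervalIntegral.integral_const_mul, integral_J₀_mul_sin]
  ring

lemma sinProdIntegral_cos_sub_mul (C K : ℝ) :
    sinProdIntegral (fun h ↦ cos (C - K * h)) = (2 * π) ^ 2 * J₀ (K / 2) ^ 2 * cos C := by
  simpa only [neg_mul, ← sub_eq_add_neg, neg_div, J₀_neg] using sinProdIntegral_cos_add_mul C (-K)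

lemma sinProdIntegral_cos_mul (K : ℝ) :
    sinProdIntegral (fun h ↦ cos (K * h)) = (2 * π) ^ 2 * J₀ (K / 2) ^ 2 := by
  simpa only [zero_add, cos_zero, mul_one] using sinProdIntegral_cos_add_mul 0 K

noncomputable def sinProdIntegral₃ (F : ℝ → ℝ → ℝ → ℝ) : ℝ :=
  sinProdIntegral fun x ↦ sinProdIntegral fun y ↦ sinProdIntegral fun z ↦ F x y z

lemma E6_eq_sinProdIntegral₃ (F : ℝ → ℝ → ℝ → ℝ) :
    E6 (fun θ₁ φ₁ θ₂ φ₂ θ₃ φ₃ ↦ F (sin θ₁ * sin φ₁) (sin θ₂ * sin φ₂) (sin θ₃ * sin φ₃)) =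
      sinProdIntegral₃ F / (2 * π) ^ 6 := by
  rw [E6, one_div_mul_eq_div]
  rfl

lemma sinProdIntegral₃_const_mul (c : ℝ) (F : ℝ → ℝ → ℝ → ℝ) :
    sinProdIntegral₃ (fun x y z ↦ c * F x y z) = c * sinProdIntegral₃ F := by
  simp only [sinProdIntegral₃, sinProdIntegral_const_mul]

lemma sinProdIntegral₃_finset_sum {ι : Type*} (s : Finset ι) {F : ι → ℝ → ℝ → ℝ → ℝ}
    (hF : ∀ i ∈ s, Continuous fun v : ℝ × ℝ × ℝ ↦ F i v.1 v.2.1 v.2.2) :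
    sinProdIntegral₃ (fun x y z ↦ ∑ i ∈ s, F i x y z) = ∑ i ∈ s, sinProdIntegral₃ (F i) := by
  unfold sinProdIntegral₃
  rw [← sinProdIntegral_finset_sum s fun i hi ↦ continuous_sinProdIntegral
    (g := fun x y ↦ sinProdIntegral fun z ↦ F i x y z)
    (continuous_sinProdIntegral (X := ℝ × ℝ) (g := fun p z ↦ F i p.1 p.2 z)
      ((hF i hi).comp (f := fun q : (ℝ × ℝ) × ℝ ↦ (q.1.1, q.1.2, q.2)) (by fun_prop)))]
  congr 1; ext x
  rw [← sinProdIntegral_finset_sum s fun i hi ↦ continuous_sinProdIntegral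
    (g := fun y z ↦ F i x y z)
    ((hF i hi).comp (f := fun q : ℝ × ℝ ↦ (x, q.1, q.2)) (by fun_prop))]
  congr 1; ext y
  exact sinProdIntegral_finset_sum s fun i hi ↦
    (hF i hi).comp (f := fun z ↦ (x, y, z)) (by fun_prop)

lemma sinProdIntegral_cos_mul_cos (p q x y : ℝ) :
    sinProdIntegral (fun z ↦ cos (p * (x - z)) * cos (q * (y - z))) =
      (2 * π) ^ 2 / 2 * (J₀ ((p - q) / 2) ^ 2 * cos (p * x - q * y) +
        J₀ ((p + q) / 2) ^ 2 * cos (p * x + q * y)) := by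
  have hprod (z : ℝ) : cos (p * (x - z)) * cos (q * (y - z)) =
      1 / 2 * cos (p * x - q * y - (p - q) * z) + 1 / 2 * cos (p * x + q * y - (p + q) * z) := by
    rw [show p * x - q * y - (p - q) * z = p * (x - z) - q * (y - z) by ring,
      show p * x + q * y - (p + q) * z = p * (x - z) + q * (y - z) by ring, cos_sub, cos_add]
    ring
  simp only [hprod]
  rw [sinProdIntegral_add (by fun_prop) (by fun_prop), sinProdIntegral_const_mul,
    sinProdIntegral_const_mul, sinProdIntegral_cos_sub_mul, sinProdIntegral_cos_sub_mul]
  ring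

lemma sinProdIntegral₃_cos_mul_cos (p q : ℝ) :
    sinProdIntegral₃ (fun x y z ↦ cos (p * (x - z)) * cos (q * (y - z))) =
      (2 * π) ^ 6 / 2 * J₀ (p / 2) ^ 2 * J₀ (q / 2) ^ 2 *
        (J₀ ((p - q) / 2) ^ 2 + J₀ ((p + q) / 2) ^ 2) := by
  have hy (x : ℝ) : sinProdIntegral (fun y ↦ sinProdIntegral fun z ↦
      cos (p * (x - z)) * cos (q * (y - z))) =
      (2 * π) ^ 4 / 2 * J₀ (q / 2) ^ 2 * (J₀ ((p - q) / 2) ^ 2 + J₀ ((p + q) / 2) ^ 2) *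
        cos (p * x) := by
    simp only [sinProdIntegral_cos_mul_cos]
    rw [sinProdIntegral_const_mul, sinProdIntegral_add (by fun_prop) (by fun_prop),
      sinProdIntegral_const_mul, sinProdIntegral_const_mul, sinProdIntegral_cos_sub_mul,
      sinProdIntegral_cos_add_mul]
    ring
  simp only [sinProdIntegral₃, hy]
  rw [sinProdIntegral_const_mul, sinProdIntegral_cos_mul]
  ring

theorem E6_sum_mul_sum {ι : Type*} (s : Finset ι) (w p : ι → ℝ) :
    E6 (fun θ₁ φ₁ θ₂ φ₂ θ₃ φ₃ ↦
      (∑ i ∈ s, w i * cos (p i * (sin θ₁ * sin φ₁ - sin θ₃ * sin φ₃))) *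
      (∑ j ∈ s, w j * cos (p j * (sin θ₂ * sin φ₂ - sin θ₃ * sin φ₃)))) =
    ∑ j ∈ s, ∑ i ∈ s, w i * w j * (J₀ (p i / 2) ^ 2 * J₀ (p j / 2) ^ 2 / 2) *
      (J₀ ((p i + p j) / 2) ^ 2 + J₀ ((p i - p j) / 2) ^ 2) := by
  have hexpand : sinProdIntegral₃ (fun x y z ↦ (∑ i ∈ s, w i * cos (p i * (x - z))) *
      (∑ j ∈ s, w j * cos (p j * (y - z)))) = ∑ i ∈ s, ∑ j ∈ s, w i * w j *
        sinProdIntegral₃ (fun x y z ↦ cos (p i * (x - z)) * cos (p j * (y - z))) := by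
    simp only [sum_mul_sum, mul_mul_mul_comm (w _)]
    rw [sinProdIntegral₃_finset_sum _ fun i _ ↦ continuous_finsetSum _ fun j _ ↦ by fun_prop]
    refine sum_congr rfl fun i _ ↦ ?_
    rw [sinProdIntegral₃_finset_sum _ fun j _ ↦ by fun_prop]
    simp only [sinProdIntegral₃_const_mul]
  rw [E6_eq_sinProdIntegral₃ fun x y z ↦ (∑ i ∈ s, w i * cos (p i * (x - z))) *
    (∑ j ∈ s, w j * cos (p j * (y - z))), hexpand, sum_comm, sum_div]
  refine sum_congr rfl fun j _ ↦ ?_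
  rw [sum_div]
  refine sum_congr rfl fun i _ ↦ ?_
  rw [sinProdIntegral₃_cos_mul_cos]
  field_simp
  ring

lemma J₀_abs_mul (x c : ℝ) : J₀ (|x| * c) = J₀ (x * c) := by
  rcases abs_cases x with ⟨h, _⟩ | ⟨h, _⟩ <;> simp only [h, neg_mul, J₀_neg]

theorem stmt_10_general (a : ℝ) (nR : ℕ) :
    E6 (fun θ₁ φ₁ θ₂ φ₂ θ₃ φ₃ =>
      (∑ s ∈ Finset.Icc 1 (nR - 1), ((nR : ℝ) - s) *
        Real.cos ((s : ℝ) * a *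
          (Real.sin θ₁ * Real.sin φ₁ - Real.sin θ₃ * Real.sin φ₃))) *
      (∑ s ∈ Finset.Icc 1 (nR - 1), ((nR : ℝ) - s) *
        Real.cos ((s : ℝ) * a *
          (Real.sin θ₂ * Real.sin φ₂ - Real.sin θ₃ * Real.sin φ₃))))
    = (∑ s ∈ Finset.Icc 1 (nR - 1), ((nR : ℝ) - s) ^ 2 *
        ((1 / 2) * (J₀ ((s : ℝ) * a / 2)) ^ 4 * (1 + (J₀ ((s : ℝ) * a)) ^ 2))) +
      ∑ s₂ ∈ Finset.Icc 1 (nR - 1),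
        ∑ s₁ ∈ (Finset.Icc 1 (nR - 1)).filter (· ≠ s₂),
          ((nR : ℝ) - s₁) * ((nR : ℝ) - s₂) *
            ((J₀ ((s₁ : ℝ) * a / 2)) ^ 2 * (J₀ ((s₂ : ℝ) * a / 2)) ^ 2 / 2) *
            ((J₀ (((s₁ : ℝ) + (s₂ : ℝ)) * a / 2)) ^ 2 +
             (J₀ (|(s₁ : ℝ) - (s₂ : ℝ)| * a / 2)) ^ 2) := by
  have hadd (s₁ s₂ : ℕ) : ((s₁ : ℝ) + s₂) * a / 2 = ((s₁ : ℝ) * a + s₂ * a) / 2 := by ring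
  have habs (s₁ s₂ : ℕ) : J₀ (|(s₁ : ℝ) - s₂| * a / 2) = J₀ (((s₁ : ℝ) * a - s₂ * a) / 2) := by
    rw [mul_div_assoc, J₀_abs_mul]
    congr 1
    ring
  rw [E6_sum_mul_sum _ (fun s : ℕ ↦ (nR : ℝ) - s) (fun s : ℕ ↦ (s : ℝ) * a), ← sum_add_distrib]
  simp only [hadd, habs]
  refine sum_congr rfl fun s hs ↦ ?_
  rw [filter_ne', ← add_sum_erase _ _ hs]
  congr 1
  rw [add_self_div_two, sub_self, zero_div, J₀_zero]
  ring

theorem stmt_10 (a : ℝ) (nR : ℕ) (hR : 1 ≤ nR) :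
    E6 (fun θ₁ φ₁ θ₂ φ₂ θ₃ φ₃ =>
      (∑ s ∈ Finset.Icc 1 (nR - 1), ((nR : ℝ) - s) *
        Real.cos ((s : ℝ) * a *
          (Real.sin θ₁ * Real.sin φ₁ - Real.sin θ₃ * Real.sin φ₃))) *
      (∑ s ∈ Finset.Icc 1 (nR - 1), ((nR : ℝ) - s) *
        Real.cos ((s : ℝ) * a *
          (Real.sin θ₂ * Real.sin φ₂ - Real.sin θ₃ * Real.sin φ₃))))
    = (∑ s ∈ Finset.Icc 1 (nR - 1), ((nR : ℝ) - s) ^ 2 *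
        ((1 / 2) * (J₀ ((s : ℝ) * a / 2)) ^ 4 * (1 + (J₀ ((s : ℝ) * a)) ^ 2))) +
      ∑ s₂ ∈ Finset.Icc 1 (nR - 1),
        ∑ s₁ ∈ (Finset.Icc 1 (nR - 1)).filter (· ≠ s₂),
          ((nR : ℝ) - s₁) * ((nR : ℝ) - s₂) *
            ((J₀ ((s₁ : ℝ) * a / 2)) ^ 2 * (J₀ ((s₂ : ℝ) * a / 2)) ^ 2 / 2) *
            ((J₀ (((s₁ : ℝ) + (s₂ : ℝ)) * a / 2)) ^ 2 +
             (J₀ (|(s₁ : ℝ) - (s₂ : ℝ)| * a / 2)) ^ 2) :=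
  stmt_10_general a nR
end

section
/- Let (θᵢ, φᵢ), i = 1, 2, 3, be independent, each uniformly distributed on [0,2π]², set hᵢ := sin θᵢ·sin φᵢ, and fix reals a, c₁, c₂, c₃. Then E[cos(a·(c₁·h₁ + c₂·h₂ + c₃·h₃))] = E[cos(a·c₁·h₁)]·E[cos(a·c₂·h₂)]·E[cos(a·c₃·h₃)] = J₀(c₁·a/2)²·J₀(c₂·a/2)²·J₀(c₃·a/2)². -/
open Real MeasureTheory Finset

/-- Expectation over one pair of angles, uniform on `[0, 2π]²`. -/
noncomputable def E2 (f : ℝ → ℝ → ℝ) : ℝ :=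
  (1 / (2 * π) ^ 2) *
    ∫ θ in (0:ℝ)..(2 * π), ∫ φ in (0:ℝ)..(2 * π), f θ φ

/-! The substitution `(θ, φ) ↦ (φ - θ, φ + θ)` preserves the integral over `[0, 2π]²` of a function
that is `2π`-periodic in each variable. As `b sin θ sin φ = (b/2) (cos (φ - θ) - cos (φ + θ))`, it
turns `∫∫ cos (b sin θ sin φ)` into `∫∫ cos ((b/2) cos t - (b/2) cos u)`, which is
`(∫ cos ((b/2) cos t))² = (2π J₀(b/2))²` because `∫ sin ((b/2) cos t) dt = 0`. The expectation over
three pairs factors for the same reason: `∫ sin (k sin φ) dφ = 0` kills the sine terms of the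
addition formula. -/

open Function

section Periodic

variable {E : Type*} [NormedAddCommGroup E] [NormedSpace ℝ E] {T : ℝ}

theorem Function.Antiperiodic.intervalIntegral_eq_zero {f : ℝ → E} (hf : Antiperiodic f T)
    (hfc : Continuous f) : ∫ x in 0..2 * T, f x = 0 := by
  have hshift : ∫ x in T..2 * T, f x = -∫ x in 0..T, f x := by
    have := intervalIntegral.integral_comp_add_right (a := 0) (b := T) f T
    rw [zero_add, ← two_mul] at this
    rw [← this, ← intervalIntegral.integral_neg]
    exact intervalIntegral.integral_congr fun x _ ↦ hf x
  rw [← intervalIntegral.integral_add_adjacent_intervals (hfc.intervalIntegrable 0 T)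
    (hfc.intervalIntegrable T _), hshift, add_neg_cancel]

theorem Function.Periodic.intervalIntegral_comp_add_int_mul {f : ℝ → E} (hf : Periodic f T)
    (hfc : Continuous f) (t : ℝ) {n : ℤ} (hn : n ≠ 0) :
    ∫ x in 0..T, f (t + n * x) = ∫ x in 0..T, f x := by
  have hn' : (n : ℝ) ≠ 0 := by exact_mod_cast hn
  rw [intervalIntegral.integral_comp_add_mul _ hn', mul_zero, add_zero, ← zsmul_eq_mul,
    hf.intervalIntegral_add_zsmul_eq n t (fun _ _ ↦ hfc.intervalIntegrable _ _),
    hf.intervalIntegral_add_eq t 0, zero_add, ← Int.cast_smul_eq_zsmul ℝ, smul_smul,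
    inv_mul_cancel₀ hn', one_smul]

theorem intervalIntegral_intervalIntegral_comp_sub_comp_add {F : ℝ → ℝ → E}
    (hF : Continuous (uncurry F)) (hF₁ : ∀ u, Periodic (F · u) T) (hF₂ : ∀ t, Periodic (F t) T) :
    ∫ θ in 0..T, ∫ φ in 0..T, F (φ - θ) (φ + θ) = ∫ t in 0..T, ∫ u in 0..T, F t u := by
  have hinner (θ : ℝ) :
      ∫ φ in 0..T, F (φ - θ) (φ + θ) = ∫ t in 0..T, F t (t + 2 * θ) := by
    have hG : Periodic (fun t ↦ F t (t + 2 * θ)) T := fun t ↦ by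
      simp only [add_right_comm t T, hF₁ _ _, hF₂ _ _]
    calc ∫ φ in 0..T, F (φ - θ) (φ + θ)
        = ∫ φ in 0..T, F (φ - θ) (φ - θ + 2 * θ) := by congr! 3; ring
      _ = ∫ t in 0 - θ..T - θ, F t (t + 2 * θ) :=
        intervalIntegral.integral_comp_sub_right (fun t ↦ F t (t + 2 * θ)) θ
      _ = ∫ t in 0..T, F t (t + 2 * θ) := by
        simpa [sub_eq_neg_add] using hG.intervalIntegral_add_eq (-θ) 0
  have hswap : ∫ θ in 0..T, ∫ t in 0..T, F t (t + 2 * θ) =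
      ∫ t in 0..T, ∫ θ in 0..T, F t (t + 2 * θ) := by
    refine MeasureTheory.intervalIntegral_intervalIntegral_swap ?_
    have hc : Continuous fun p : ℝ × ℝ ↦ F p.2 (p.2 + 2 * p.1) := by fun_prop
    exact (hc.continuousOn.integrableOn_compact (isCompact_uIcc.prod isCompact_uIcc)).mono_set
      (Set.prod_mono Set.uIoc_subset_uIcc Set.uIoc_subset_uIcc)
  have hscale (t : ℝ) : ∫ θ in 0..T, F t (t + 2 * θ) = ∫ u in 0..T, F t u := by
    simpa using (hF₂ t).intervalIntegral_comp_add_int_mul (by fun_prop) t two_ne_zero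
  simp only [hinner, hswap, hscale]

end Periodic

theorem integral_cos_mul_cos (z : ℝ) : ∫ t in 0..2 * π, cos (z * cos t) = 2 * π * J₀ z := by
  have hper : Periodic (fun t ↦ cos (z * sin t)) (2 * π) := fun t ↦ by simp [sin_add_two_pi]
  calc ∫ t in 0..2 * π, cos (z * cos t)
      = ∫ t in 0..2 * π, cos (z * sin (t + π / 2)) := by simp only [sin_add_pi_div_two]
    _ = ∫ t in π / 2..π / 2 + 2 * π, cos (z * sin t) := by
        rw [intervalIntegral.integral_comp_add_right (fun t ↦ cos (z * sin t)), zero_add, add_comm]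
    _ = ∫ t in 0..0 + 2 * π, cos (z * sin t) := hper.intervalIntegral_add_eq _ _
    _ = 2 * π * J₀ z := by rw [zero_add, J₀]; field_simp

theorem integral_integral_cos_mul_sin_mul_sin (b : ℝ) :
    ∫ θ in 0..2 * π, ∫ φ in 0..2 * π, cos (b * (sin θ * sin φ)) = (2 * π * J₀ (b / 2)) ^ 2 := by
  set z := b / 2
  have hsin : ∫ t in 0..2 * π, sin (z * cos t) = 0 :=
    Antiperiodic.intervalIntegral_eq_zero (fun t ↦ by simp [cos_add_pi]) (by fun_prop)
  have harg (θ φ : ℝ) :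
      cos (b * (sin θ * sin φ)) = cos (z * cos (φ - θ) - z * cos (φ + θ)) := by
    congr 1
    rw [cos_sub, cos_add]
    ring
  have hinner (t : ℝ) : ∫ u in 0..2 * π, cos (z * cos t - z * cos u) =
      cos (z * cos t) * ∫ u in 0..2 * π, cos (z * cos u) := by
    simp only [cos_sub]
    rw [intervalIntegral.integral_add (Continuous.intervalIntegrable (by fun_prop) _ _)
        (Continuous.intervalIntegrable (by fun_prop) _ _),
      intervalIntegral.integral_const_mul, intervalIntegral.integral_const_mul, hsin, mul_zero,
      add_zero]
  simp only [harg]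
  rw [intervalIntegral_intervalIntegral_comp_sub_comp_add
    (F := fun t u ↦ cos (z * cos t - z * cos u)) (by fun_prop) (fun u t ↦ by simp)
    (fun t u ↦ by simp)]
  simp only [hinner, intervalIntegral.integral_mul_const, integral_cos_mul_cos]
  ring

theorem integral_integral_cos_add_mul_sin_mul_sin (x b : ℝ) :
    ∫ θ in 0..2 * π, ∫ φ in 0..2 * π, cos (x + b * (sin θ * sin φ)) =
      cos x * ∫ θ in 0..2 * π, ∫ φ in 0..2 * π, cos (b * (sin θ * sin φ)) := by
  rw [← intervalIntegral.integral_const_mul]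
  refine intervalIntegral.integral_congr fun θ _ ↦ ?_
  have hsin : ∫ φ in 0..2 * π, sin (b * sin θ * sin φ) = 0 :=
    Antiperiodic.intervalIntegral_eq_zero (fun φ ↦ by simp [sin_add_pi]) (by fun_prop)
  simp only [cos_add, ← mul_assoc b]
  rw [intervalIntegral.integral_sub (Continuous.intervalIntegrable (by fun_prop) _ _)
      (Continuous.intervalIntegrable (by fun_prop) _ _),
    intervalIntegral.integral_const_mul, intervalIntegral.integral_const_mul, hsin, mul_zero,
    sub_zero]

theorem E2_cos_mul_sin_mul_sin (b : ℝ) :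
    E2 (fun θ φ ↦ cos (b * (sin θ * sin φ))) = J₀ (b / 2) ^ 2 := by
  rw [E2, integral_integral_cos_mul_sin_mul_sin]
  field_simp

theorem E6_cos_sum_eq_mul_E2 (a c₁ c₂ c₃ : ℝ) :
    E6 (fun θ₁ φ₁ θ₂ φ₂ θ₃ φ₃ ↦
        cos (a * (c₁ * (sin θ₁ * sin φ₁) + c₂ * (sin θ₂ * sin φ₂) + c₃ * (sin θ₃ * sin φ₃))))
      = E2 (fun θ φ ↦ cos (a * c₁ * (sin θ * sin φ))) *
        E2 (fun θ φ ↦ cos (a * c₂ * (sin θ * sin φ))) *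
        E2 (fun θ φ ↦ cos (a * c₃ * (sin θ * sin φ))) := by
  simp only [E6, E2, mul_add, ← mul_assoc a, integral_integral_cos_add_mul_sin_mul_sin,
    intervalIntegral.integral_mul_const]
  ring

theorem stmt_16 (a c₁ c₂ c₃ : ℝ) :
    E6 (fun θ₁ φ₁ θ₂ φ₂ θ₃ φ₃ =>
        Real.cos (a * (c₁ * (Real.sin θ₁ * Real.sin φ₁) +
          c₂ * (Real.sin θ₂ * Real.sin φ₂) + c₃ * (Real.sin θ₃ * Real.sin φ₃))))
      = E2 (fun θ φ => Real.cos (a * c₁ * (Real.sin θ * Real.sin φ))) *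
        E2 (fun θ φ => Real.cos (a * c₂ * (Real.sin θ * Real.sin φ))) *
        E2 (fun θ φ => Real.cos (a * c₃ * (Real.sin θ * Real.sin φ))) ∧
    E6 (fun θ₁ φ₁ θ₂ φ₂ θ₃ φ₃ =>
        Real.cos (a * (c₁ * (Real.sin θ₁ * Real.sin φ₁) +
          c₂ * (Real.sin θ₂ * Real.sin φ₂) + c₃ * (Real.sin θ₃ * Real.sin φ₃))))
      = (J₀ (c₁ * a / 2)) ^ 2 * (J₀ (c₂ * a / 2)) ^ 2 * (J₀ (c₃ * a / 2)) ^ 2 := by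
  refine ⟨E6_cos_sum_eq_mul_E2 a c₁ c₂ c₃, ?_⟩
  rw [E6_cos_sum_eq_mul_E2]
  simp only [E2_cos_mul_sin_mul_sin, mul_comm a]
end
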